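/- arXiv:1011.3559 — 5 statements merged into one kernel-verified Lean document; each statement's English description precedes it below -/
import Mathlib

section
/- Let $P$ be a finite $p$-group, $Q \leq P$ a subgroup, and $k$ a field of characteristic $p$. Then the Jacobson radical of the centralizer algebra $kP^Q$ equals $\ker(\varepsilon) \cap kP^Q$, where $\varepsilon : kP \to k$ is the augmentation map. In particular, $kP^Q$ is a local algebra. -/
set_option synthInstance.maxHeartbeats 1000000
set_option maxHeartbeats 1000000

open MonoidAlgebra Finset
open scoped Classical

/-- The centralizer algebra `kP^Q`: the subalgebra of the group algebra `kP`
fixed by the conjugation action of the subgroup `Q`. -/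
noncomputable def centAlg (k : Type*) [Field k] {P : Type*} [Group P] (Q : Subgroup P) :
    Subalgebra k (MonoidAlgebra k P) :=
  ⨅ q ∈ Q, AlgHom.equalizer
    (MonoidAlgebra.domCongr k k (MulAut.conj q : P ≃* P)).toAlgHom (AlgHom.id k _)

/-- The augmentation map `kP → k`. -/
noncomputable def aug (k : Type*) [Field k] (P : Type*) [Group P] :
    MonoidAlgebra k P →ₐ[k] k := MonoidAlgebra.lift k k P 1

/-- The Jacobson radical of a `k`-algebra, as a `k`-submodule. -/
noncomputable def jacRad (k : Type*) [Field k] (A : Type*) [Ring A] [Algebra k A] :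
    Submodule k A :=
  Submodule.restrictScalars k ((⊥ : Ideal A).jacobson)

/-- The Loewy length: the least `d` with `J^d = 0`. -/
noncomputable def llen (k : Type*) [Field k] (A : Type*) [Ring A] [Algebra k A] : ℕ :=
  sInf {d | jacRad k A ^ d = ⊥}

/-- The `Q`-conjugation orbit sum `κ_x ∈ kP`. -/
noncomputable def kappa {k : Type*} [Field k] {P : Type*} [Group P] [Fintype P]
    (Q : Subgroup P) (x : P) : MonoidAlgebra k P :=
  ∑ y ∈ Finset.univ.filter (fun y => ∃ q ∈ Q, q * x * q⁻¹ = y), MonoidAlgebra.single y 1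

/-- The span `I` of the orbit sums `κ_x`, `x ∉ C_P(Q)`. -/
noncomputable def idealI (k : Type*) [Field k] {P : Type*} [Group P] [Fintype P]
    (Q : Subgroup P) : Submodule k (MonoidAlgebra k P) :=
  Submodule.span k
    {f | ∃ x ∉ Subgroup.centralizer (Q : Set P), f = kappa Q x}

/-- The span of `C_P(Q)` inside `kP`, i.e. the subalgebra `kC_P(Q)`. -/
noncomputable def subC (k : Type*) [Field k] {P : Type*} [Group P]
    (Q : Subgroup P) : Submodule k (MonoidAlgebra k P) :=
  Submodule.span k
    {f | ∃ c ∈ Subgroup.centralizer (Q : Set P), f = MonoidAlgebra.single c (1 : k)}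

/-- The radical `J' = J(kC_P(Q))`, i.e. the augmentation-trivial part of `kC_P(Q)`. -/
noncomputable def jacC (k : Type*) [Field k] {P : Type*} [Group P]
    (Q : Subgroup P) : Submodule k (MonoidAlgebra k P) :=
  subC k Q ⊓ LinearMap.ker (aug k P).toLinearMap

/-!
The augmentation ideal of `kP` is nil, by induction on `|P|`: pick a central `z ≠ 1`. An element
of augmentation zero maps to a nilpotent element of `k[P/⟨z⟩]`, so one of its powers lies in the
left ideal `kP (z - 1)`; and `z - 1` is central with `(z - 1)^(p^v) = z^(p^v) - 1 = 0`.
Hence `ε` restricted to `kP^Q` is a character with nil kernel. For such a character every element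
off the kernel is a unit (a nonzero scalar plus a commuting nilpotent), so the kernel is the unique
maximal left ideal: it is the Jacobson radical and the algebra is local.
-/

section NilKernel

variable {k A : Type*} [Field k] [Ring A] [Algebra k A]

theorem isUnit_iff_apply_ne_zero_of_ker_nil (e : A →ₐ[k] k)
    (hnil : ∀ a, e a = 0 → IsNilpotent a) (a : A) : IsUnit a ↔ e a ≠ 0 := by
  refine ⟨fun ha => (ha.map e).ne_zero, fun ha => ?_⟩
  have hdiff : e (a - algebraMap k A (e a)) = 0 := by simp
  simpa using (hnil _ hdiff).isUnit_add_left_of_commute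
    ((isUnit_iff_ne_zero.mpr ha).map (algebraMap k A)) (Algebra.commutes _ _).symm

theorem mem_jacobson_bot_iff_of_ker_nil (e : A →ₐ[k] k)
    (hnil : ∀ a, e a = 0 → IsNilpotent a) (a : A) :
    a ∈ (⊥ : Ideal A).jacobson ↔ e a = 0 := by
  constructor
  · have hmax : (RingHom.ker e).IsMaximal :=
      RingHom.ker_isMaximal_of_surjective e fun c => ⟨algebraMap k A c, by simp⟩
    exact fun ha => (sInf_le ⟨bot_le, hmax⟩ : (⊥ : Ideal A).jacobson ≤ RingHom.ker e) ha
  · refine fun ha => Ideal.mem_jacobson_iff.mpr fun y => ?_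
    obtain ⟨u, hu⟩ := (isUnit_iff_apply_ne_zero_of_ker_nil e hnil (y * a + 1)).mpr (by simp [ha])
    refine ⟨↑u⁻¹, ?_⟩
    rw [mul_assoc, ← mul_add_one, ← hu, Units.inv_mul, sub_self]
    exact Submodule.zero_mem _

theorem isLocalRing_of_ker_nil (e : A →ₐ[k] k) (hnil : ∀ a, e a = 0 → IsNilpotent a) :
    IsLocalRing A := by
  have := e.toRingHom.domain_nontrivial
  refine .of_isUnit_or_isUnit_one_sub_self fun a => ?_
  simp only [isUnit_iff_apply_ne_zero_of_ker_nil e hnil, map_sub, map_one]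
  by_contra! h
  simp [h.1] at h

end NilKernel

theorem isNilpotent_sub_one_of_pow_char_pow_eq_one {R : Type*} [Ring R] (p : ℕ) [Fact p.Prime]
    [CharP R p] {u : R} {n : ℕ} (hu : u ^ p ^ n = 1) : IsNilpotent (u - 1) :=
  ⟨p ^ n, by rw [sub_pow_char_pow_of_commute p n (Commute.one_right u), hu, one_pow, sub_self]⟩

section GroupAlgebra

variable {k : Type*} [Field k]

theorem aug_single {G : Type*} [Group G] (g : G) (a : k) : aug k G (single g a) = a := by
  simp [aug, lift_single]

theorem aug_mapDomainRingHom {G H : Type*} [Group G] [Group H] (f : G →* H)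
    (x : MonoidAlgebra k G) : aug k H (mapDomainRingHom k f x) = aug k G x := by
  induction x using induction_linear with
  | zero => simp
  | add x y hx hy => rw [map_add, map_add, hx, hy, map_add]
  | single g a => rw [mapDomainRingHom_apply, mapDomain_single, aug_single, aug_single]

theorem eq_single_one_aug {G : Type*} [Group G] [Subsingleton G] (x : MonoidAlgebra k G) :
    x = single 1 (aug k G x) := by
  induction x using induction_linear with
  | zero => simp
  | add x y hx hy => rw [map_add, single_add, ← hx, ← hy]
  | single g a => rw [aug_single, Subsingleton.elim g 1]

def subOneMemSubgroup {G : Type*} [Group G] (I : Ideal (MonoidAlgebra k G)) : Subgroup G where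
  carrier := {g | single g 1 - 1 ∈ I}
  one_mem' := by simp [← one_def]
  mul_mem' {g h} hg hh := by
    have hgh : single (g * h) (1 : k) - 1 = single g 1 * (single h 1 - 1) + (single g 1 - 1) := by
      rw [mul_sub, single_mul_single, mul_one, mul_one]; abel
    simpa only [Set.mem_ofPred_eq, hgh] using I.add_mem (I.mul_mem_left _ hh) hg
  inv_mem' {g} hg := by
    have hinv : single g⁻¹ (1 : k) - 1 = -(single g⁻¹ 1 * (single g 1 - 1)) := by
      rw [mul_sub, single_mul_single, inv_mul_cancel, mul_one, mul_one, ← one_def]; abel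
    simpa only [Set.mem_ofPred_eq, hinv] using I.neg_mem (I.mul_mem_left _ hg)

theorem mem_of_mapDomain_mk_eq_zero {G : Type*} [Group G] {N : Subgroup G}
    {I : Ideal (MonoidAlgebra k G)} (hN : N ≤ subOneMemSubgroup I) {x : MonoidAlgebra k G}
    (hx : mapDomain (QuotientGroup.mk : G → G ⧸ N) x = 0) : x ∈ I := by
  suffices h : ∀ y : MonoidAlgebra k G,
      y - mapDomain Quotient.out (mapDomain (QuotientGroup.mk : G → G ⧸ N) y) ∈ I by
    simpa [hx] using h x
  intro y
  induction y using induction_linear with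
  | zero => simp
  | add x y hx hy => simpa only [mapDomain_add, add_sub_add_comm] using I.add_mem hx hy
  | single g a =>
    set g' := (QuotientGroup.mk g : G ⧸ N).out
    have hg : g⁻¹ * g' ∈ N := QuotientGroup.eq.mp (QuotientGroup.out_eq' _).symm
    have hdiff : single g a - single g' a = -(single g a * (single (g⁻¹ * g') 1 - 1)) := by
      rw [mul_sub, single_mul_single, mul_inv_cancel_left, mul_one, mul_one, neg_sub]
    rw [mapDomain_single, mapDomain_single, hdiff]
    exact I.neg_mem (I.mul_mem_left _ (hN hg))

end GroupAlgebra

theorem Subgroup.normal_zpowers_of_mem_center {G : Type*} [Group G] {z : G}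
    (hz : z ∈ Subgroup.center G) : (Subgroup.zpowers z).Normal :=
  ⟨fun a ha g => by
    rwa [Subgroup.mem_center_iff.mp (Subgroup.zpowers_le.mpr hz ha) g, mul_inv_cancel_right]⟩

theorem Subgroup.card_quotient_zpowers_lt {G : Type*} [Group G] [Finite G] {z : G} (hz : z ≠ 1) :
    Nat.card (G ⧸ Subgroup.zpowers z) < Nat.card G := by
  have h := (Subgroup.one_lt_card_iff_ne_bot _).mpr (Subgroup.zpowers_ne_bot.mpr hz)
  rw [← (Subgroup.zpowers z).index_mul_card, ← Subgroup.index_eq_card]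
  exact lt_mul_of_one_lt_right (Nat.pos_of_ne_zero Subgroup.index_ne_zero_of_finite) h

theorem IsPGroup.isNilpotent_of_aug_eq_zero {p : ℕ} [Fact p.Prime] {k : Type*} [Field k]
    [CharP k p] {P : Type*} [Group P] [Finite P] (hP : IsPGroup p P) {x : MonoidAlgebra k P}
    (hx : aug k P x = 0) : IsNilpotent x := by
  induction hn : Nat.card P using Nat.strong_induction_on generalizing P with | _ n ih =>
  rcases subsingleton_or_nontrivial P with hP1 | hP1
  · rw [eq_single_one_aug x, hx, single_zero]
    exact IsNilpotent.zero
  have := hP.center_nontrivial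
  obtain ⟨⟨z, hz⟩, hne⟩ := exists_ne (1 : Subgroup.center P)
  have hz1 : z ≠ 1 := fun h => hne (Subtype.ext h)
  set N := Subgroup.zpowers z
  have := Subgroup.normal_zpowers_of_mem_center hz
  obtain ⟨m, hm⟩ := ih _ (hn ▸ Subgroup.card_quotient_zpowers_lt hz1) (hP.to_quotient N)
    (x := mapDomainRingHom k (QuotientGroup.mk' N) x) (by rw [aug_mapDomainRingHom, hx]) rfl
  have hxm : x ^ m ∈ Ideal.span {single z (1 : k) - 1} := by
    refine mem_of_mapDomain_mk_eq_zero (N := N) (Subgroup.zpowers_le.mpr ?_) ?_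
    · exact Ideal.subset_span rfl
    · rwa [← map_pow] at hm
  obtain ⟨y, hy⟩ := Ideal.mem_span_singleton'.mp hxm
  obtain ⟨v, hv⟩ := hP z
  have : CharP (MonoidAlgebra k P) p :=
    charP_of_injective_algebraMap (algebraMap k _).injective p
  have hcomm : Commute y (single z (1 : k) - 1) :=
    ((single_commute (fun g => (Subgroup.mem_center_iff.mp hz g).symm)
      (fun _ => Commute.one_left _) y).sub_left (Commute.one_left y)).symm
  refine IsNilpotent.of_pow (m := m) (hy ▸ hcomm.isNilpotent_mul_left ?_)
  exact isNilpotent_sub_one_of_pow_char_pow_eq_one p (by rw [single_pow, hv, one_pow, one_def])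

theorem stmt_0 {p : ℕ} [Fact p.Prime] (k : Type*) [Field k] [CharP k p]
    (P : Type*) [Group P] [Fintype P] (hP : IsPGroup p P) (Q : Subgroup P) :
    (∀ a : centAlg k Q, a ∈ (⊥ : Ideal (centAlg k Q)).jacobson ↔
      aug k P (a : MonoidAlgebra k P) = 0) ∧
    IsLocalRing (centAlg k Q) := by
  set e : centAlg k Q →ₐ[k] k := (aug k P).comp (centAlg k Q).val
  have hnil : ∀ a, e a = 0 → IsNilpotent a := fun a ha =>
    (IsNilpotent.map_iff Subtype.val_injective).mp (hP.isNilpotent_of_aug_eq_zero ha)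
  exact ⟨mem_jacobson_bot_iff_of_ker_nil e hnil, isLocalRing_of_ker_nil e hnil⟩
end

section
/- Let $P$ be a finite $p$-group with subgroup $Q$, $k$ a field of characteristic $p$, and let $x, y \in P \setminus C_P(Q)$. If $c \in C_P(Q)$, then the coefficient of $c$ in the product $\kappa_x \kappa_y \in kP$ is zero, where $\kappa_x = \sum_{q \in Q/C_Q(x)} {}^q x$. -/
set_option synthInstance.maxHeartbeats 1000000
set_option maxHeartbeats 1000000

open MonoidAlgebra Finset
open scoped Classical

/-!
The coefficient of `c` in `κ_x κ_y` counts the `Q`-conjugates `a` of `x` for which `a⁻¹ c` is a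
`Q`-conjugate of `y`. As `c` centralizes `Q`, this set is stable under `Q`-conjugation, and it
contains no element of `C_P(Q)` because `x ∉ C_P(Q)`. So the `p`-group `Q` acts on it without
fixed points, and its size is divisible by `p`.
-/

theorem IsPGroup.dvd_card_of_smul_mem {p : ℕ} [Fact p.Prime] {G α : Type*} [Group G]
    [MulAction G α] (hG : IsPGroup p G) (s : Finset α)
    (hs : ∀ g : G, ∀ a ∈ s, g • a ∈ s)
    (hfix : ∀ a ∈ s, a ∉ MulAction.fixedPoints G α) : p ∣ #s := by
  let s' : SubMulAction G α := ⟨s, fun g _ ha => hs g _ ha⟩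
  by_contra hp
  obtain ⟨b, hb⟩ := hG.nonempty_fixed_point_of_prime_not_dvd_card s' <| by
    convert hp using 2
    exact Nat.card_eq_finsetCard s
  exact hfix b b.2 fun g => congrArg Subtype.val (hb g)

theorem IsPGroup.dvd_card_of_conj_mem {p : ℕ} [Fact p.Prime] {P : Type*} [Group P]
    {Q : Subgroup P} (hQ : IsPGroup p Q) (S : Finset P)
    (hS : ∀ q ∈ Q, ∀ a ∈ S, q * a * q⁻¹ ∈ S)
    (hSC : ∀ a ∈ S, a ∉ Subgroup.centralizer (Q : Set P)) : p ∣ #S := by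
  let H : Subgroup (ConjAct P) := Q.map (ConjAct.toConjAct : P ≃* ConjAct P).toMonoidHom
  have hH : IsPGroup p H := hQ.map _
  have hsmul : ∀ h : H, ∃ q ∈ Q, ∀ a : P, h • a = q * a * q⁻¹ := by
    rintro ⟨_, q, hq, rfl⟩
    exact ⟨q, hq, ConjAct.toConjAct_smul q⟩
  refine hH.dvd_card_of_smul_mem S (fun h a ha => ?_) fun a ha hfix => hSC a ha ?_
  · obtain ⟨q, hq, hh⟩ := hsmul h
    exact hh a ▸ hS q hq a ha
  · refine Subgroup.mem_centralizer_iff.mpr fun q hq => ?_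
    have := hfix ⟨ConjAct.toConjAct q, q, hq, rfl⟩
    rw [Subgroup.smul_def, ConjAct.toConjAct_smul] at this
    exact mul_inv_eq_iff_eq_mul.mp this

section ConjOrbit

variable {P : Type*} [Group P] [Fintype P] (Q : Subgroup P)

noncomputable def conjOrbit (x : P) : Finset P :=
  univ.filter fun a => ∃ q ∈ Q, q * x * q⁻¹ = a

variable {Q}

@[simp]
theorem mem_conjOrbit {x a : P} : a ∈ conjOrbit Q x ↔ ∃ q ∈ Q, q * x * q⁻¹ = a := by
  simp [conjOrbit]

theorem conj_mem_conjOrbit {x a q : P} (hq : q ∈ Q) (ha : a ∈ conjOrbit Q x) :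
    q * a * q⁻¹ ∈ conjOrbit Q x := by
  obtain ⟨r, hr, rfl⟩ := mem_conjOrbit.mp ha
  exact mem_conjOrbit.mpr ⟨q * r, Q.mul_mem hq hr, by group⟩

theorem mem_centralizer_of_mem_conjOrbit {x a : P} (ha : a ∈ conjOrbit Q x)
    (hac : a ∈ Subgroup.centralizer (Q : Set P)) : x ∈ Subgroup.centralizer (Q : Set P) := by
  obtain ⟨r, hr, rfl⟩ := mem_conjOrbit.mp ha
  have hrx : r * x * r⁻¹ = x :=
    mul_left_cancel ((Subgroup.mem_centralizer_iff.mp hac r hr).trans (by group))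
  exact hrx ▸ hac

variable {k : Type*} [Field k]

theorem kappa_eq_sum_conjOrbit (x : P) :
    kappa (k := k) Q x = ∑ a ∈ conjOrbit Q x, single a 1 := rfl

theorem coeff_kappa (x a : P) :
    (kappa (k := k) Q x).coeff a = if a ∈ conjOrbit Q x then 1 else 0 := by
  simp [kappa_eq_sum_conjOrbit, Finsupp.single_apply]

theorem coeff_kappa_mul (x c : P) (f : MonoidAlgebra k P) :
    (kappa Q x * f).coeff c = ∑ a ∈ conjOrbit Q x, f.coeff (a⁻¹ * c) := by
  simp only [kappa_eq_sum_conjOrbit, sum_mul, coeff_sum, Finsupp.finsetSum_apply,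
    coeff_single_mul_apply, one_mul]

theorem coeff_kappa_mul_kappa (x y c : P) :
    (kappa (k := k) Q x * kappa Q y).coeff c =
      (#{a ∈ conjOrbit Q x | a⁻¹ * c ∈ conjOrbit Q y} : k) := by
  simp [coeff_kappa_mul, coeff_kappa, sum_boole]

end ConjOrbit

theorem stmt_2_general {p : ℕ} [Fact p.Prime] (k : Type*) [Field k] [CharP k p]
    (P : Type*) [Group P] [Fintype P] (hP : IsPGroup p P) (Q : Subgroup P) (x y c : P)
    (hx : x ∉ Subgroup.centralizer (Q : Set P))
    (hc : c ∈ Subgroup.centralizer (Q : Set P)) :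
    (kappa (k := k) Q x * kappa (k := k) Q y).coeff c = 0 := by
  rw [coeff_kappa_mul_kappa, CharP.cast_eq_zero_iff k p]
  refine (hP.to_subgroup Q).dvd_card_of_conj_mem _ (fun q hq a ha => ?_) fun a ha hac => ?_
  · rw [mem_filter] at ha ⊢
    have hcq : q * c * q⁻¹ = c := by
      rw [Subgroup.mem_centralizer_iff.mp hc q hq, mul_inv_cancel_right]
    have hqc : (q * a * q⁻¹)⁻¹ * c = q * (a⁻¹ * c) * q⁻¹ := by
      conv_lhs => rw [← hcq]
      group
    exact ⟨conj_mem_conjOrbit hq ha.1, hqc ▸ conj_mem_conjOrbit hq ha.2⟩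
  · exact hx (mem_centralizer_of_mem_conjOrbit (mem_filter.mp ha).1 hac)

theorem stmt_2 {p : ℕ} [Fact p.Prime] (k : Type*) [Field k] [CharP k p]
    (P : Type*) [Group P] [Fintype P] (hP : IsPGroup p P) (Q : Subgroup P) (x y c : P)
    (hx : x ∉ Subgroup.centralizer (Q : Set P)) (hy : y ∉ Subgroup.centralizer (Q : Set P))
    (hc : c ∈ Subgroup.centralizer (Q : Set P)) :
    (kappa (k := k) Q x * kappa (k := k) Q y).coeff c = 0 :=
  stmt_2_general k P hP Q x y c hx hc
end

section
/- Let $P$ be a finite $p$-group with subgroup $Q$, write $kP^Q = kC \ltimes I$ with $C = C_P(Q)$ and $J' = J(kC)$. Then $J'I = IJ'$ if and only if for all $x \in P$ and all $c \in C$ there exists $q \in Q$ such that $[x, qc] \in C$. -/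
set_option synthInstance.maxHeartbeats 1000000
set_option maxHeartbeats 1000000

open MonoidAlgebra Finset
open scoped Classical
open scoped commutatorElement

/-! For `c ∈ C = C_P(Q)` one has `c κ_x = κ_{cx}` and `κ_x c = κ_{xc}`, and `J'` is spanned by
the elements `c - 1`; hence `J'I` is spanned by the `κ_{cx} - κ_x` and `IJ'` by the `κ_{xc} - κ_x`
(`x ∉ C`). Since `[x, qc] = xc (qxq⁻¹)⁻¹ c⁻¹`, the condition on `x, c` says exactly that `xc` is
`Q`-conjugate into the coset `Cx`, i.e. `κ_{xc} = κ_{zx}` for some `z ∈ C`, which gives both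
inclusions. Conversely, if `xc` is not `Q`-conjugate into `Cx`, the linear form that is `1` on the
orbit sums `κ_y` with `y` `Q`-conjugate into `Cx` and `0` on the others kills `J'I`, because that
set is stable under left multiplication by `C`, but not `κ_{xc} - κ_x ∈ IJ'`. -/

section

variable {k : Type*} [Field k] {P : Type*} [Group P] {Q : Subgroup P}

variable (Q) in
def conjSetoid : Setoid P where
  r x y := ∃ q ∈ Q, q * x * q⁻¹ = y
  iseqv :=
    { refl := fun _ => ⟨1, Q.one_mem, by group⟩
      symm := by
        rintro _ _ ⟨q, hq, rfl⟩
        exact ⟨q⁻¹, inv_mem hq, by group⟩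
      trans := by
        rintro _ _ _ ⟨q, hq, rfl⟩ ⟨q', hq', rfl⟩
        exact ⟨q' * q, mul_mem hq' hq, by group⟩ }

def centralizerMulOrbit (Q : Subgroup P) (x : P) : Set P :=
  {w | ∃ q ∈ Q, ∃ z ∈ Subgroup.centralizer (Q : Set P), q * (z * x) * q⁻¹ = w}

theorem conj_mul_eq_mul_conj {q c : P} (hq : q ∈ Q) (hc : c ∈ Subgroup.centralizer (Q : Set P))
    (x : P) : q * (c * x) * q⁻¹ = c * (q * x * q⁻¹) := by
  rw [← mul_assoc q, Subgroup.mem_centralizer_iff.mp hc q hq]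
  group

theorem conj_mul_eq_conj_mul {q c : P} (hq : q ∈ Q) (hc : c ∈ Subgroup.centralizer (Q : Set P))
    (x : P) : q * (x * c) * q⁻¹ = q * x * q⁻¹ * c := by
  rw [mul_assoc q x, mul_assoc, mul_assoc, ← Subgroup.mem_centralizer_iff.mp hc q⁻¹ (inv_mem hq)]
  group

theorem mem_centralizerMulOrbit_self (x : P) : x ∈ centralizerMulOrbit Q x :=
  ⟨1, Q.one_mem, 1, Subgroup.one_mem _, by group⟩

theorem conj_mem_centralizerMulOrbit {q x w : P} (hq : q ∈ Q) (hw : w ∈ centralizerMulOrbit Q x) :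
    q * w * q⁻¹ ∈ centralizerMulOrbit Q x := by
  obtain ⟨q', hq', z, hz, rfl⟩ := hw
  exact ⟨q * q', mul_mem hq hq', z, hz, by group⟩

theorem mul_mem_centralizerMulOrbit {c x w : P} (hc : c ∈ Subgroup.centralizer (Q : Set P))
    (hw : w ∈ centralizerMulOrbit Q x) : c * w ∈ centralizerMulOrbit Q x := by
  obtain ⟨q, hq, z, hz, rfl⟩ := hw
  exact ⟨q, hq, c * z, mul_mem hc hz, by rw [mul_assoc c, conj_mul_eq_mul_conj hq hc]⟩

theorem mul_mem_centralizerMulOrbit_iff {c x w : P} (hc : c ∈ Subgroup.centralizer (Q : Set P)) :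
    c * w ∈ centralizerMulOrbit Q x ↔ w ∈ centralizerMulOrbit Q x :=
  ⟨fun h => by simpa using mul_mem_centralizerMulOrbit (inv_mem hc) h,
    mul_mem_centralizerMulOrbit hc⟩

theorem exists_commutatorElement_mem_centralizer_iff {x c : P}
    (hc : c ∈ Subgroup.centralizer (Q : Set P)) :
    (∃ q ∈ Q, ⁅x, q * c⁆ ∈ Subgroup.centralizer (Q : Set P)) ↔
      x * c ∈ centralizerMulOrbit Q x := by
  simp only [centralizerMulOrbit, Set.mem_ofPred_eq]
  refine exists_congr fun q => and_congr_right fun hq => ?_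
  have hcomm : ⁅x, q * c⁆ = x * c * (q * x * q⁻¹)⁻¹ * c⁻¹ := by
    rw [commutatorElement_def, Subgroup.mem_centralizer_iff.mp hc q hq]
    group
  rw [hcomm, Subgroup.mul_mem_cancel_right _ (inv_mem hc)]
  constructor
  · intro hw
    exact ⟨_, hw, by rw [conj_mul_eq_mul_conj hq hw]; group⟩
  · rintro ⟨z, hz, he⟩
    rwa [← he, conj_mul_eq_mul_conj hq hz, mul_inv_cancel_right]

theorem aug_single_one (g : P) : aug k P (MonoidAlgebra.single g 1) = 1 := by
  simp [aug]

theorem sub_aug_smul_one_mem_span {f : MonoidAlgebra k P} (hf : f ∈ subC k Q) :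
    f - aug k P f • 1 ∈ Submodule.span k
      {f | ∃ c ∈ Subgroup.centralizer (Q : Set P), f = MonoidAlgebra.single c 1 - 1} := by
  induction hf using Submodule.span_induction with
  | mem g hg =>
    obtain ⟨c, hc, rfl⟩ := hg
    rw [aug_single_one, one_smul]
    exact Submodule.subset_span ⟨c, hc, rfl⟩
  | zero => simp
  | add g g' _ _ hg hg' =>
    convert add_mem hg hg' using 1
    rw [map_add, add_smul]
    abel
  | smul a g _ hg =>
    convert Submodule.smul_mem _ a hg using 1
    rw [map_smul, smul_sub, smul_assoc]

theorem jacC_eq_span :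
    jacC k Q = Submodule.span k
      {f | ∃ c ∈ Subgroup.centralizer (Q : Set P), f = MonoidAlgebra.single c 1 - 1} := by
  refine le_antisymm (fun f hf => ?_) (Submodule.span_le.mpr ?_)
  · obtain ⟨hfC, hfaug⟩ := Submodule.mem_inf.mp hf
    have hf0 : aug k P f = 0 := LinearMap.mem_ker.mp hfaug
    simpa [hf0] using sub_aug_smul_one_mem_span hfC
  · rintro _ ⟨c, hc, rfl⟩
    refine Submodule.mem_inf.mpr ⟨sub_mem (Submodule.subset_span ⟨c, hc, rfl⟩)
      (Submodule.subset_span ⟨1, Subgroup.one_mem _, MonoidAlgebra.one_def⟩), ?_⟩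
    simp [LinearMap.mem_ker, aug_single_one]

variable [Fintype P]

theorem kappa_coeff (x z : P) :
    (kappa Q x : MonoidAlgebra k P).coeff z = if ∃ q ∈ Q, q * x * q⁻¹ = z then 1 else 0 := by
  simp [kappa, Finsupp.single_apply]

theorem kappa_conj {q : P} (hq : q ∈ Q) (x : P) :
    (kappa Q (q * x * q⁻¹) : MonoidAlgebra k P) = kappa Q x := by
  ext z
  simp only [kappa_coeff]
  congr 1
  have hx : conjSetoid Q x (q * x * q⁻¹) := ⟨q, hq, rfl⟩
  exact propext ⟨(conjSetoid Q).trans' hx, (conjSetoid Q).trans' ((conjSetoid Q).symm' hx)⟩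

theorem single_mul_kappa {c : P} (hc : c ∈ Subgroup.centralizer (Q : Set P)) (x : P) :
    MonoidAlgebra.single c (1 : k) * kappa Q x = kappa Q (c * x) := by
  ext z
  simp only [MonoidAlgebra.coeff_single_mul_apply, one_mul, kappa_coeff]
  congr 1
  refine propext (exists_congr fun q => and_congr_right fun hq => ?_)
  rw [conj_mul_eq_mul_conj hq hc, eq_inv_mul_iff_mul_eq]

theorem kappa_mul_single {c : P} (hc : c ∈ Subgroup.centralizer (Q : Set P)) (x : P) :
    kappa Q x * MonoidAlgebra.single c (1 : k) = kappa Q (x * c) := by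
  ext z
  simp only [MonoidAlgebra.coeff_mul_single_apply, mul_one, kappa_coeff]
  congr 1
  refine propext (exists_congr fun q => and_congr_right fun hq => ?_)
  rw [conj_mul_eq_conj_mul hq hc, eq_mul_inv_iff_mul_eq]

theorem jacC_mul_idealI :
    jacC k Q * idealI k Q = Submodule.span k
      {f | ∃ c ∈ Subgroup.centralizer (Q : Set P), ∃ y ∉ Subgroup.centralizer (Q : Set P),
        f = kappa Q (c * y) - kappa Q y} := by
  rw [jacC_eq_span, idealI, Submodule.span_mul_span]
  congr 1
  ext f
  simp only [Set.mem_mul, Set.mem_ofPred_eq]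
  constructor
  · rintro ⟨_, ⟨c, hc, rfl⟩, _, ⟨y, hy, rfl⟩, rfl⟩
    exact ⟨c, hc, y, hy, by rw [sub_mul, one_mul, single_mul_kappa hc]⟩
  · rintro ⟨c, hc, y, hy, rfl⟩
    exact ⟨_, ⟨c, hc, rfl⟩, _, ⟨y, hy, rfl⟩, by rw [sub_mul, one_mul, single_mul_kappa hc]⟩

theorem idealI_mul_jacC :
    idealI k Q * jacC k Q = Submodule.span k
      {f | ∃ y ∉ Subgroup.centralizer (Q : Set P), ∃ c ∈ Subgroup.centralizer (Q : Set P),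
        f = kappa Q (y * c) - kappa Q y} := by
  rw [jacC_eq_span, idealI, Submodule.span_mul_span]
  congr 1
  ext f
  simp only [Set.mem_mul, Set.mem_ofPred_eq]
  constructor
  · rintro ⟨_, ⟨y, hy, rfl⟩, _, ⟨c, hc, rfl⟩, rfl⟩
    exact ⟨y, hy, c, hc, by rw [mul_sub, mul_one, kappa_mul_single hc]⟩
  · rintro ⟨y, hy, c, hc, rfl⟩
    exact ⟨_, ⟨y, hy, rfl⟩, _, ⟨c, hc, rfl⟩, by rw [mul_sub, mul_one, kappa_mul_single hc]⟩

theorem exists_linearMap_kappa_eq_indicator (S : Set P)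
    (hS : ∀ q ∈ Q, ∀ y ∈ S, q * y * q⁻¹ ∈ S) :
    ∃ φ : MonoidAlgebra k P →ₗ[k] k, ∀ y, φ (kappa Q y) = if y ∈ S then 1 else 0 := by
  let r : P → P := fun y => (Quotient.mk (conjSetoid Q) y).out
  have hr : ∀ y, conjSetoid Q y (r y) := fun y => (conjSetoid Q).symm' (Quotient.mk_out y)
  have hr_eq : ∀ {y w}, conjSetoid Q y w → r y = r w := fun h =>
    congrArg Quotient.out (Quotient.sound h)
  have hS_iff : ∀ {y w}, conjSetoid Q y w → (w ∈ S ↔ y ∈ S) := by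
    rintro y _ ⟨q, hq, rfl⟩
    exact ⟨fun h => by simpa [mul_assoc] using hS q⁻¹ (inv_mem hq) _ h, hS q hq y⟩
  -- one representative per `Q`-class: class sizes may vanish in `k`, which rules out averaging
  let T := univ.filter fun w => w ∈ S ∧ r w = w
  refine ⟨∑ w ∈ T, (Finsupp.lapply w).comp (MonoidAlgebra.coeffLinearEquiv k).toLinearMap,
    fun y => ?_⟩
  have hT : T.filter (fun w => ∃ q ∈ Q, q * y * q⁻¹ = w) = if y ∈ S then {r y} else ∅ := by
    ext w
    simp only [T, mem_filter, mem_univ, true_and]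
    split_ifs with hy
    · refine ⟨fun ⟨⟨_, hw⟩, hyw⟩ => mem_singleton.mpr ((hr_eq hyw).trans hw).symm, fun h => ?_⟩
      rw [mem_singleton.mp h]
      exact ⟨⟨(hS_iff (hr y)).mpr hy, (hr_eq (hr y)).symm⟩, hr y⟩
    · exact iff_of_false (fun ⟨⟨hw, _⟩, hyw⟩ => hy ((hS_iff hyw).mp hw)) (notMem_empty w)
  simp [kappa_coeff, Finset.sum_boole, hT, apply_ite]

theorem mul_mem_centralizerMulOrbit_of_jacC_mul_idealI_eq
    (h : jacC k Q * idealI k Q = idealI k Q * jacC k Q) (x : P) {c : P}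
    (hc : c ∈ Subgroup.centralizer (Q : Set P)) : x * c ∈ centralizerMulOrbit Q x := by
  by_contra hxc
  have hx : x ∉ Subgroup.centralizer (Q : Set P) := fun hx =>
    hxc ⟨1, Q.one_mem, x * c * x⁻¹, mul_mem (mul_mem hx hc) (inv_mem hx), by group⟩
  obtain ⟨φ, hφ⟩ := exists_linearMap_kappa_eq_indicator (k := k) (centralizerMulOrbit Q x)
    fun _ hq _ => conj_mem_centralizerMulOrbit hq
  have hker : jacC k Q * idealI k Q ≤ LinearMap.ker φ := by
    rw [jacC_mul_idealI, Submodule.span_le]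
    rintro _ ⟨c', hc', y, -, rfl⟩
    simp [hφ, mul_mem_centralizerMulOrbit_iff hc']
  have hmem : kappa Q (x * c) - kappa Q x ∈ jacC k Q * idealI k Q := by
    rw [h, idealI_mul_jacC]
    exact Submodule.subset_span ⟨x, hx, c, hc, rfl⟩
  simpa [hφ, hxc, mem_centralizerMulOrbit_self] using hker hmem

theorem jacC_mul_idealI_eq_idealI_mul_jacC
    (h : ∀ x, ∀ c ∈ Subgroup.centralizer (Q : Set P), x * c ∈ centralizerMulOrbit Q x) :
    jacC k Q * idealI k Q = idealI k Q * jacC k Q := by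
  apply le_antisymm
  · rw [jacC_mul_idealI, Submodule.span_le]
    rintro _ ⟨c, hc, y, hy, rfl⟩
    obtain ⟨q, hq, z, hz, he⟩ := h y⁻¹ c⁻¹ (inv_mem hc)
    have hcy : c * y = q * (y * z⁻¹) * q⁻¹ := by
      rw [← inv_inj, mul_inv_rev, ← he]
      group
    rw [hcy, kappa_conj hq, idealI_mul_jacC]
    exact Submodule.subset_span ⟨y, hy, z⁻¹, inv_mem hz, rfl⟩
  · rw [idealI_mul_jacC, Submodule.span_le]
    rintro _ ⟨y, hy, c, hc, rfl⟩
    obtain ⟨q, hq, z, hz, he⟩ := h y c hc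
    rw [← he, kappa_conj hq, jacC_mul_idealI]
    exact Submodule.subset_span ⟨z, hz, y, hy, rfl⟩

end

theorem stmt_5_general (k : Type*) [Field k]
    (P : Type*) [Group P] [Fintype P] (Q : Subgroup P) :
    jacC k Q * idealI k Q = idealI k Q * jacC k Q ↔
      ∀ x : P, ∀ c ∈ Subgroup.centralizer (Q : Set P),
        ∃ q ∈ Q, ⁅x, q * c⁆ ∈ Subgroup.centralizer (Q : Set P) :=
  ⟨fun h x _ hc => (exists_commutatorElement_mem_centralizer_iff hc).mpr
      (mul_mem_centralizerMulOrbit_of_jacC_mul_idealI_eq h x hc),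
    fun h => jacC_mul_idealI_eq_idealI_mul_jacC fun x _ hc =>
      (exists_commutatorElement_mem_centralizer_iff hc).mp (h x _ hc)⟩

theorem stmt_5 {p : ℕ} [Fact p.Prime] (k : Type*) [Field k] [CharP k p]
    (P : Type*) [Group P] [Fintype P] (hP : IsPGroup p P) (Q : Subgroup P) :
    jacC k Q * idealI k Q = idealI k Q * jacC k Q ↔
      ∀ x : P, ∀ c ∈ Subgroup.centralizer (Q : Set P),
        ∃ q ∈ Q, ⁅x, q * c⁆ ∈ Subgroup.centralizer (Q : Set P) :=
  stmt_5_general k P Q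
end

section
/- Let $p$ be an odd prime, $P$ a finite $p$-group, and $Q \leq P$ a non-central subgroup. Then the action of $C = C_P(Q)$ by left multiplication on the set of $Q$-conjugation orbit sums $\Omega = \{\kappa_x : x \in P \setminus C\}$ has at least 2 orbits. -/
set_option synthInstance.maxHeartbeats 1000000
set_option maxHeartbeats 1000000

open MonoidAlgebra Finset
open scoped Classical

/-!
Since `p` is odd, `|P|` is odd. So every orbit of `C_P(Q) × Q`, acting on `P` by
`(c, q) • x = c q x q⁻¹`, has odd size, whereas `P \ C_P(Q)` has the even size
`|P| - |C_P(Q)|`. As `P \ C_P(Q)` is nonempty (`Q` is not central) and a union of orbits,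
it is not a single orbit.
-/

theorem MulAction.odd_ncard_orbit_of_odd_card {H α : Type*} [Group H] [Finite H] [MulAction H α]
    (hH : Odd (Nat.card H)) (a : α) : Odd (orbit H a).ncard :=
  index_stabilizer H a ▸ hH.of_dvd_nat (Subgroup.index_dvd_card _)

namespace Subgroup

variable {G : Type*} [Group G]

theorem even_ncard_compl_of_odd_card [Finite G] (hG : Odd (Nat.card G)) (H : Subgroup G) :
    Even (H : Set G)ᶜ.ncard := by
  have hH : Odd (H : Set G).ncard := hG.of_dvd_nat (card_subgroup_dvd_card H)
  rw [← Set.ncard_add_ncard_compl (H : Set G)] at hG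
  exact (Nat.odd_add.mp hG).mp hH

variable (K : Subgroup G)

theorem conj_mem_centralizer {q x : G} (hq : q ∈ K) (hx : x ∈ centralizer (K : Set G)) :
    q * x * q⁻¹ ∈ centralizer (K : Set G) := by
  rw [mem_centralizer_iff] at hx ⊢
  intro k hk
  have hcomm := hx (q⁻¹ * k * q) (K.mul_mem (K.mul_mem (K.inv_mem hq) hk) hq)
  calc k * (q * x * q⁻¹) = q * ((q⁻¹ * k * q) * x) * q⁻¹ := by group
    _ = q * (x * (q⁻¹ * k * q)) * q⁻¹ := by rw [hcomm]
    _ = q * x * q⁻¹ * k := by group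

instance : MulAction (centralizer (K : Set G) × K) G where
  smul g x := (g.1 : G) * ((g.2 : G) * x * (g.2 : G)⁻¹)
  one_smul x := by
    change (1 : G) * ((1 : G) * x * (1 : G)⁻¹) = x
    simp
  mul_smul g h x := by
    change (g.1 * h.1 : G) * ((g.2 * h.2 : G) * x * ((g.2 : G) * h.2)⁻¹) =
      g.1 * (g.2 * (h.1 * (h.2 * x * (h.2 : G)⁻¹)) * (g.2 : G)⁻¹)
    rw [← mul_assoc (g.2 : G) (h.1 : G), mem_centralizer_iff.mp h.1.2 g.2 g.2.2]
    group

theorem orbit_centralizer_prod_subset_compl {x : G} (hx : x ∉ centralizer (K : Set G)) :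
    MulAction.orbit (centralizer (K : Set G) × K) x ⊆ (centralizer (K : Set G) : Set G)ᶜ := by
  rintro _ ⟨⟨c, q⟩, rfl⟩ hmem
  have hconj : (q : G) * x * (q : G)⁻¹ ∈ centralizer (K : Set G) :=
    (mul_mem_cancel_left c.2).mp hmem
  apply hx
  simpa [mul_assoc] using conj_mem_centralizer K (K.inv_mem q.2) hconj

theorem exists_notMem_orbit_centralizer_prod [Finite G] (hG : Odd (Nat.card G))
    (hK : ¬ K ≤ center G) :
    ∃ x y : G, x ∉ centralizer (K : Set G) ∧ y ∉ centralizer (K : Set G) ∧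
      y ∉ MulAction.orbit (centralizer (K : Set G) × K) x := by
  obtain ⟨x, hx⟩ : ∃ x, x ∉ centralizer (K : Set G) := by
    by_contra! h
    exact hK (centralizer_eq_top_iff_subset.mp ((eq_top_iff' _).mpr h))
  by_contra! h
  have horbit :
      MulAction.orbit (centralizer (K : Set G) × K) x = (centralizer (K : Set G) : Set G)ᶜ :=
    (orbit_centralizer_prod_subset_compl K hx).antisymm fun y hy => h x y hx hy
  have hodd : Odd (Nat.card (centralizer (K : Set G) × K)) := by
    rw [Nat.card_prod]
    exact (hG.of_dvd_nat (card_subgroup_dvd_card _)).mul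
      (hG.of_dvd_nat (card_subgroup_dvd_card _))
  have horbit_odd := MulAction.odd_ncard_orbit_of_odd_card hodd x
  rw [horbit] at horbit_odd
  exact Nat.not_even_iff_odd.mpr horbit_odd (even_ncard_compl_of_odd_card hG _)

end Subgroup

theorem stmt_10 {p : ℕ} [Fact p.Prime] (hp : Odd p) {P : Type*} [Group P] [Fintype P]
    (hP : IsPGroup p P) (Q : Subgroup P) (hQ : ¬ Q ≤ Subgroup.center P) :
    ∃ x y : P, x ∉ Subgroup.centralizer (Q : Set P) ∧ y ∉ Subgroup.centralizer (Q : Set P) ∧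
      ∀ c ∈ Subgroup.centralizer (Q : Set P), ∀ q ∈ Q, c * (q * x * q⁻¹) ≠ y := by
  obtain ⟨n, hn⟩ := IsPGroup.iff_card.mp hP
  obtain ⟨x, y, hx, hy, hxy⟩ := Q.exists_notMem_orbit_centralizer_prod (hn ▸ hp.pow) hQ
  exact ⟨x, y, hx, hy, fun c hc q hq h => hxy ⟨(⟨c, hc⟩, ⟨q, hq⟩), h⟩⟩
end

section
/- Let $P$ be a finite $p$-group, $R \leq P$ a nontrivial subgroup, and $k$ a field of characteristic $p$. Then the Loewy length of the $kP$-module $k[P/R]$ is strictly smaller than the Loewy length of $kP$: $\ell\ell(k[P/R]) < \ell\ell(kP)$. -/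
set_option synthInstance.maxHeartbeats 1000000
set_option maxHeartbeats 1000000

open MonoidAlgebra Finset
open scoped Classical

/-!
Over a field of characteristic `p` the augmentation ideal `ω` of `kP` is nilpotent: induct on
`|P|` through a central `z ≠ 1`; some `ω^m` dies in `k[P/⟨z⟩]`, so it lies in `kP·(z - 1)`, and
`z - 1` is central with `(z - 1)^(p^e) = 0`. Being also a maximal left ideal, `ω` is the radical.
If `ω^d = 0` with `d` minimal, every `f ∈ ω^(d-1)` satisfies `f·(g - 1) = 0`, so `f` is a multiple
of the sum `σ` of all elements of `P`, and `f·kP ⊆ kσ`. Finally `σ` lies in the left ideal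
generated by the `r - 1`, `r ∈ R`: for a left transversal `S` of `R`, `σ = (∑ S)(∑ R)`, and
`∑ R = ∑_{r ∈ R} (r - 1)` because `p` divides `|R|`.
-/

lemma LinearMap.range_mulRight_pow_le {R A : Type*} [CommSemiring R] [Semiring A] [Algebra R A]
    {ζ : A} (hζ : ∀ a, Commute ζ a) (n : ℕ) :
    LinearMap.range (LinearMap.mulRight R ζ) ^ n ≤ LinearMap.range (LinearMap.mulRight R (ζ ^ n)) := by
  induction n with
  | zero => simp
  | succ n ih =>
    rw [pow_succ, pow_succ]
    refine Submodule.mul_le.mpr fun x hx y hy => ?_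
    obtain ⟨a, rfl⟩ := ih hx
    obtain ⟨b, rfl⟩ := hy
    refine ⟨a * b, ?_⟩
    simp only [LinearMap.mulRight_apply, mul_assoc]
    rw [← mul_assoc (ζ ^ n), ((hζ b).pow_left n).eq, mul_assoc]

lemma Ideal.le_jacobson_bot_of_forall_isNilpotent {R : Type*} [Ring R] {I : Ideal R}
    (hI : ∀ x ∈ I, IsNilpotent x) : I ≤ (⊥ : Ideal R).jacobson := by
  intro x hx
  refine Ideal.mem_jacobson_iff.mpr fun y => ?_
  obtain ⟨u, hu⟩ := (hI _ (I.mul_mem_left y hx)).isUnit_one_add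
  refine ⟨↑u⁻¹, (Submodule.mem_bot R).mpr ?_⟩
  calc ↑u⁻¹ * y * x + ↑u⁻¹ - 1 = ↑u⁻¹ * (1 + y * x) - 1 := by noncomm_ring
    _ = 0 := by rw [← hu, Units.inv_mul, sub_self]

namespace MonoidAlgebra

variable {k : Type*} [Field k] {G : Type*}

section Group

variable [Group G]

@[simp]
lemma aug_single (g : G) (c : k) : aug k G (single g c) = c := by
  simp [aug]

lemma aug_surjective : Function.Surjective (aug k G) :=
  fun c => ⟨single 1 c, aug_single 1 c⟩

variable (k G) in
noncomputable def augIdeal : Submodule k (MonoidAlgebra k G) :=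
  LinearMap.ker (aug k G).toLinearMap

lemma mem_augIdeal {f : MonoidAlgebra k G} : f ∈ augIdeal k G ↔ aug k G f = 0 := Iff.rfl

lemma single_sub_one_mem_augIdeal (g : G) : single g (1 : k) - 1 ∈ augIdeal k G := by
  simp [mem_augIdeal]

lemma aug_mapDomainAlgHom {H : Type*} [Group H] (φ : G →* H) (f : MonoidAlgebra k G) :
    aug k H (mapDomainAlgHom k k φ f) = aug k G f := by
  induction f using induction_linear with
  | zero => simp
  | add f g hf hg => simp only [map_add, hf, hg]
  | single g c => simp [mapDomainAlgHom, mapDomainRingHom, mapDomain_single]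

lemma augIdeal_pow_le_ker_mapDomainAlgHom {H : Type*} [Group H] (φ : G →* H) {m : ℕ}
    (hm : augIdeal k H ^ m = ⊥) :
    augIdeal k G ^ m ≤ LinearMap.ker (mapDomainAlgHom k k φ).toLinearMap := by
  have hmap : (augIdeal k G).map (mapDomainAlgHom k k φ).toLinearMap ≤ augIdeal k H := by
    rintro _ ⟨f, hf, rfl⟩
    exact (aug_mapDomainAlgHom φ f).trans hf
  rw [LinearMap.le_ker_iff_map, Submodule.map_pow, ← le_bot_iff, ← hm]
  exact pow_le_pow_left' hmap m

lemma augIdeal_eq_bot_of_subsingleton [Subsingleton G] : augIdeal k G = ⊥ := by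
  have hsingle : ∀ f : MonoidAlgebra k G, f = single 1 (aug k G f) := fun f => by
    induction f using induction_linear with
    | zero => simp
    | add f g hf hg => rw [map_add, single_add, ← hf, ← hg]
    | single g c => rw [aug_single, Subsingleton.elim g 1]
  refine (Submodule.eq_bot_iff _).mpr fun f hf => ?_
  rw [hsingle f, mem_augIdeal.mp hf, single_zero]

lemma single_sub_one_pow_eq_zero {p : ℕ} [Fact p.Prime] [CharP k p] {z : G} {e : ℕ}
    (hz : z ^ p ^ e = 1) : (single z (1 : k) - 1) ^ p ^ e = 0 := by
  have := charP_of_injective_algebraMap' k (A := MonoidAlgebra k G) p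
  rw [sub_pow_char_pow_of_commute p e (Commute.one_right _), single_pow, hz, one_pow, one_pow,
    ← one_def, sub_self]

lemma commute_single_sub_one {z : G} (hz : z ∈ Subgroup.center G) (f : MonoidAlgebra k G) :
    Commute (single z (1 : k) - 1) f :=
  (single_commute (fun g => (Subgroup.mem_center_iff.mp hz g).symm) (Commute.one_left) f).sub_left
    (Commute.one_left f)

lemma ker_mapDomainAlgHom_mk_le_range_mulRight [Finite G] {N : Subgroup G} [N.Normal] {z : G}
    (hN : N ≤ Subgroup.zpowers z) :
    LinearMap.ker (mapDomainAlgHom k k (QuotientGroup.mk' N)).toLinearMap ≤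
      LinearMap.range (LinearMap.mulRight k (single z (1 : k) - 1)) := by
  set ρ := mapDomainLinearMap k k (Quotient.out : G ⧸ N → G)
  suffices key : ∀ f, f - ρ (mapDomainAlgHom k k (QuotientGroup.mk' N) f) ∈
      LinearMap.range (LinearMap.mulRight k (single z (1 : k) - 1)) by
    intro f hf
    have hf0 : mapDomainAlgHom k k (QuotientGroup.mk' N) f = 0 := hf
    simpa only [hf0, map_zero, sub_zero] using key f
  intro f
  induction f using induction_linear with
  | zero => simp
  | add f g hf hg => simpa only [map_add, add_sub_add_comm] using add_mem hf hg
  | single a c =>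
    set t : G := (a : G ⧸ N).out
    obtain ⟨j, hj : z ^ j = t⁻¹ * a⟩ : t⁻¹ * a ∈ Submonoid.powers z :=
      mem_powers_iff_mem_zpowers.mpr (hN (QuotientGroup.eq.mp (QuotientGroup.out_eq' _)))
    have hρ : ρ (mapDomainAlgHom k k (QuotientGroup.mk' N) (single a c)) = single t c := by
      simp [ρ, mapDomainAlgHom, mapDomainRingHom, mapDomain_single, t]
    -- `a - t = t (z^j - 1) = t (1 + z + ⋯ + z^(j-1)) (z - 1)`
    refine ⟨single t c * ∑ i ∈ range j, single z 1 ^ i, ?_⟩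
    rw [hρ, LinearMap.mulRight_apply, mul_assoc, geom_sum_mul, single_pow, one_pow, hj, mul_sub,
      single_mul_single, mul_inv_cancel_left, mul_one, mul_one]

theorem _root_.IsPGroup.exists_augIdeal_pow_eq_bot {p : ℕ} [Fact p.Prime] [CharP k p] [Finite G]
    (hG : IsPGroup p G) : ∃ n, augIdeal k G ^ n = ⊥ := by
  induction h : Nat.card G using Nat.strong_induction_on generalizing G with
  | _ n ih =>
  rcases subsingleton_or_nontrivial G with hG1 | hG1
  · exact ⟨1, by rw [pow_one, augIdeal_eq_bot_of_subsingleton]⟩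
  have := hG.center_nontrivial
  obtain ⟨⟨z, hz⟩, hz1⟩ := exists_ne (1 : Subgroup.center G)
  set N := Subgroup.zpowers z
  have : N.Normal := ⟨fun x hx g => by
    rwa [(Subgroup.mem_center_iff.mp (Subgroup.zpowers_le.mpr hz hx) g), mul_inv_cancel_right]⟩
  have hcard : Nat.card (G ⧸ N) < n := by
    have hN : 1 < Nat.card N := (Subgroup.one_lt_card_iff_ne_bot N).mpr
      ((Subgroup.zpowers_ne_bot).mpr fun h => hz1 (Subtype.ext h))
    rw [← h, ← N.card_mul_index, ← Subgroup.index_eq_card]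
    exact lt_mul_left (Nat.pos_of_ne_zero Subgroup.index_ne_zero_of_finite) hN
  obtain ⟨m, hm⟩ := ih _ hcard (hG.to_quotient N) rfl
  obtain ⟨e, he⟩ := hG z
  refine ⟨m * p ^ e, le_bot_iff.mp ?_⟩
  calc augIdeal k G ^ (m * p ^ e)
      ≤ LinearMap.range (LinearMap.mulRight k (single z (1 : k) - 1)) ^ p ^ e := by
        rw [pow_mul]
        exact pow_le_pow_left' ((augIdeal_pow_le_ker_mapDomainAlgHom _ hm).trans
          (ker_mapDomainAlgHom_mk_le_range_mulRight le_rfl)) _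
    _ ≤ LinearMap.range (LinearMap.mulRight k ((single z (1 : k) - 1) ^ p ^ e)) :=
        LinearMap.range_mulRight_pow_le (commute_single_sub_one hz) _
    _ = ⊥ := by simp [single_sub_one_pow_eq_zero he]

theorem _root_.IsPGroup.jacobson_bot_eq_ker_aug {p : ℕ} [Fact p.Prime] [CharP k p] [Finite G]
    (hG : IsPGroup p G) : (⊥ : Ideal (MonoidAlgebra k G)).jacobson = RingHom.ker (aug k G) := by
  refine le_antisymm (sInf_le ⟨bot_le, RingHom.ker_isMaximal_of_surjective _ aug_surjective⟩) ?_
  obtain ⟨n, hn⟩ := hG.exists_augIdeal_pow_eq_bot (k := k)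
  refine Ideal.le_jacobson_bot_of_forall_isNilpotent fun x hx => ⟨n, ?_⟩
  have hxn := Submodule.pow_mem_pow (augIdeal k G) hx n
  rwa [hn, Submodule.mem_bot] at hxn

theorem _root_.IsPGroup.jacRad_eq_augIdeal {p : ℕ} [Fact p.Prime] [CharP k p] [Finite G]
    (hG : IsPGroup p G) : jacRad k (MonoidAlgebra k G) = augIdeal k G := by
  ext x
  rw [jacRad, Submodule.restrictScalars_mem, hG.jacobson_bot_eq_ker_aug, RingHom.mem_ker,
    mem_augIdeal]

end Group

section GroupSum

variable [Fintype G]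

variable (k G) in
noncomputable def groupSum : MonoidAlgebra k G := ∑ g : G, single g 1

@[simp]
lemma coeff_groupSum (g : G) : (groupSum k G).coeff g = 1 := by
  simp [groupSum]

variable [Group G]

lemma groupSum_mul (f : MonoidAlgebra k G) : groupSum k G * f = aug k G f • groupSum k G := by
  induction f using induction_linear with
  | zero => simp
  | add f g hf hg => rw [mul_add, hf, hg, map_add, add_smul]
  | single g c =>
    rw [aug_single, groupSum, Finset.sum_mul, Finset.smul_sum]
    exact Fintype.sum_equiv (Equiv.mulRight g) _ _ fun h => by simp [single_mul_single]

lemma eq_coeff_one_smul_groupSum {f : MonoidAlgebra k G} (hf : ∀ g, f * single g 1 = f) :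
    f = f.coeff 1 • groupSum k G := by
  ext g
  calc f.coeff g = (f * single g 1).coeff g := by rw [hf]
    _ = (f.coeff 1 • groupSum k G).coeff g := by
      rw [coeff_mul_single_apply, mul_inv_cancel, mul_one, coeff_smul_apply, coeff_groupSum,
        smul_eq_mul, mul_one]

lemma groupSum_eq_mul_of_isComplement {S : Set G} {H : Subgroup G}
    (hSH : Subgroup.IsComplement S H) :
    groupSum k G = (∑ s : S, single (s : G) 1) * ∑ h : H, single (h : G) 1 := by
  rw [Finset.sum_mul_sum, ← Fintype.sum_prod_type', groupSum]
  exact (Fintype.sum_bijective _ hSH _ _ fun x => by rw [single_mul_single, one_mul]).symm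

lemma eq_coeff_one_smul_groupSum_of_mem_pow {d : ℕ} (hd : augIdeal k G ^ (d + 1) = ⊥)
    {f : MonoidAlgebra k G} (hf : f ∈ augIdeal k G ^ d) : f = f.coeff 1 • groupSum k G :=
  eq_coeff_one_smul_groupSum fun g => by
    have hfg := Submodule.mul_mem_mul hf (single_sub_one_mem_augIdeal g)
    rwa [← pow_succ, hd, Submodule.mem_bot, mul_sub, mul_one, sub_eq_zero] at hfg

lemma sum_single_mem_span_single_sub_one {p : ℕ} [Fact p.Prime] [CharP k p] {R : Subgroup G}
    (hR : IsPGroup p R) (hR1 : R ≠ ⊥) :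
    ∑ r : R, single (r : G) (1 : k) ∈ Ideal.span {f | ∃ r ∈ R, f = single r (1 : k) - 1} := by
  have hp : p ∣ Nat.card R := hR.card_eq_or_dvd.resolve_left (hR1 ∘ Subgroup.card_eq_one.mp)
  have hsum : ∑ r : R, (single (r : G) (1 : k) - 1) ∈
      Ideal.span {f | ∃ r ∈ R, f = single r (1 : k) - 1} :=
    sum_mem fun r _ => Ideal.subset_span ⟨r, r.2, rfl⟩
  rwa [Finset.sum_sub_distrib, Finset.sum_const, card_univ, ← Nat.card_eq_fintype_card,
    ← Nat.cast_smul_eq_nsmul k, (CharP.cast_eq_zero_iff k p _).mpr hp, zero_smul, sub_zero] at hsum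

lemma groupSum_mem_span_single_sub_one {p : ℕ} [Fact p.Prime] [CharP k p] (hG : IsPGroup p G)
    {R : Subgroup G} (hR : R ≠ ⊥) :
    groupSum k G ∈ Ideal.span {f | ∃ r ∈ R, f = single r (1 : k) - 1} := by
  rw [groupSum_eq_mul_of_isComplement (Subgroup.isComplement_range_left Quotient.out_eq')]
  exact Ideal.mul_mem_left _ _ (sum_single_mem_span_single_sub_one (hG.to_subgroup R) hR)

end GroupSum

end MonoidAlgebra

theorem stmt_15 {p : ℕ} [Fact p.Prime] (k : Type*) [Field k] [CharP k p]
    {P : Type*} [Group P] [Fintype P] (hP : IsPGroup p P)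
    (R : Subgroup P) (hR : R ≠ ⊥) :
    sInf {d : ℕ | ∀ f ∈ jacRad k (MonoidAlgebra k P) ^ d, ∀ a : MonoidAlgebra k P,
        f * a ∈ Ideal.span {g : MonoidAlgebra k P | ∃ r ∈ R, g = MonoidAlgebra.single r (1 : k) - 1}}
      < sInf {d : ℕ | jacRad k (MonoidAlgebra k P) ^ d = ⊥} := by
  obtain ⟨n, hn⟩ := hP.exists_augIdeal_pow_eq_bot (k := k)
  simp only [hP.jacRad_eq_augIdeal]
  set d := sInf {d : ℕ | augIdeal k P ^ d = ⊥}
  have hd : augIdeal k P ^ d = ⊥ := Nat.sInf_mem (s := {d : ℕ | augIdeal k P ^ d = ⊥}) ⟨n, hn⟩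
  obtain ⟨d', hd'⟩ : ∃ d', d = d' + 1 := Nat.exists_eq_succ_of_ne_zero fun h => by
    rw [h, pow_zero] at hd
    exact one_ne_zero ((Submodule.mem_bot k).mp (hd ▸ Submodule.one_le.mp le_rfl))
  rw [hd'] at hd ⊢
  refine (Nat.sInf_le fun f hf a => ?_).trans_lt d'.lt_succ_self
  rw [eq_coeff_one_smul_groupSum_of_mem_pow hd hf, smul_mul_assoc, groupSum_mul]
  exact Submodule.smul_of_tower_mem _ _
    (Submodule.smul_of_tower_mem _ _ (groupSum_mem_span_single_sub_one hP hR))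
end
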